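/- For positive semidefinite Hermitian matrices ρ_u (u in a finite set U) with common average ρ̄ = E_u ρ_u, the average trace distance satisfies E_u ‖ρ_u - ρ̄‖₁ ≤ tr √(E_u ρ_u² - ρ̄²). -/

import Mathlib

/-!
Writing `A_u = ρ_u - ρ̄`, the variance `M = E_u A_u²` is positive semidefinite. For any Hermitian
`X, Y` with `X Y = 1`, the Cauchy–Schwarz inequality for the Hilbert–Schmidt inner product gives
`tr |A| = ⟨X, Y |A|⟩ ≤ (tr X² + tr (Y² A²)) / 2`, where `|A| = √(A²)`. Averaging over `u` turns
`A_u²` into `M`; choosing `X = (M + ε)^{1/4}` and `Y = X⁻¹` bounds the right-hand side by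
`tr √(M + ε)`, and letting `ε → 0` gives `tr √M`.
-/

open Finset
open scoped ComplexOrder

/-- The square root of a positive semidefinite matrix, as defined in the older Mathlib
(`Matrix.PosSemidef.sqrt`, since removed). -/
noncomputable def Matrix.PosSemidef.sqrt {𝕜 : Type*} [RCLike 𝕜] {n : Type*} [Fintype n]
    [DecidableEq n] {A : Matrix n n 𝕜} (hA : A.PosSemidef) : Matrix n n 𝕜 :=
  hA.1.eigenvectorUnitary.1 * Matrix.diagonal ((↑) ∘ (√·) ∘ hA.1.eigenvalues) *
    (star hA.1.eigenvectorUnitary : Matrix n n 𝕜)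

/-- The trace norm ‖A‖₁ = tr √(A†A). -/
noncomputable def traceNorm {n : Type*} [Fintype n] [DecidableEq n]
    (A : Matrix n n ℂ) : ℝ :=
  ((Matrix.posSemidef_conjTranspose_mul_self A).sqrt.trace).re

open Matrix Filter Topology

theorem Finset.inv_card_smul_sum_sub_mul_sub {K R ι : Type*} [Field K] [CharZero K] [Ring R]
    [Algebra K R] [Fintype ι] [Nonempty ι] (a : ι → R) {m : R}
    (hm : m = (Fintype.card ι : K)⁻¹ • ∑ i, a i) :
    (Fintype.card ι : K)⁻¹ • ∑ i, (a i - m) * (a i - m)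
      = (Fintype.card ι : K)⁻¹ • ∑ i, a i * a i - m * m := by
  have hcard : (Fintype.card ι : K) ≠ 0 := Nat.cast_ne_zero.2 Fintype.card_ne_zero
  have hsum : ∑ i, a i = (Fintype.card ι : K) • m := by
    rw [hm, smul_smul, mul_inv_cancel₀ hcard, one_smul]
  have hexp : ∀ i, (a i - m) * (a i - m) = a i * a i - a i * m - m * a i + m * m := fun i => by
    noncomm_ring
  simp only [hexp, sum_add_distrib, sum_sub_distrib, ← sum_mul, ← mul_sum, hsum, sum_const,
    card_univ, smul_mul_assoc, mul_smul_comm, ← Nat.cast_smul_eq_nsmul K, smul_add, smul_sub,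
    smul_smul, inv_mul_cancel₀ hcard, one_smul]
  abel

namespace Matrix

variable {𝕜 : Type*} [RCLike 𝕜] {n : Type*} [Fintype n]

theorem re_trace_conjTranspose_mul_le (X Y : Matrix n n 𝕜) :
    RCLike.re (Xᴴ * Y).trace ≤ (RCLike.re (Xᴴ * X).trace + RCLike.re (Yᴴ * Y).trace) / 2 := by
  have hnonneg := RCLike.nonneg_iff.mp (posSemidef_conjTranspose_mul_self (X - Y)).trace_nonneg
  have hswap : RCLike.re (Yᴴ * X).trace = RCLike.re (Xᴴ * Y).trace := by
    rw [← conjTranspose_conjTranspose X, ← conjTranspose_mul, trace_conjTranspose,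
      conjTranspose_conjTranspose, RCLike.star_def, RCLike.conj_re]
  simp only [conjTranspose_sub, sub_mul, mul_sub, trace_sub, map_sub] at hnonneg
  linarith [hnonneg.1]

variable [DecidableEq n]

/-- With `X = S^{1/2}` for a positive definite `S`, this is `tr T ≤ (tr S + tr (S⁻¹ T²)) / 2`. -/
theorem IsHermitian.re_trace_le_of_mul_eq_one {T X Y : Matrix n n 𝕜} (hT : T.IsHermitian)
    (hX : X.IsHermitian) (hY : Y.IsHermitian) (hXY : X * Y = 1) :
    RCLike.re T.trace ≤ (RCLike.re (X * X).trace + RCLike.re (Y * Y * (T * T)).trace) / 2 := by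
  have h := re_trace_conjTranspose_mul_le X (Y * T)
  have hcyc : (Y * Y * (T * T)).trace = (T * Y * (Y * T)).trace := by
    rw [← Matrix.mul_assoc, trace_mul_comm]
    simp only [Matrix.mul_assoc]
  rwa [hX.eq, ← Matrix.mul_assoc, hXY, Matrix.one_mul, conjTranspose_mul, hT.eq, hY.eq,
    ← hcyc] at h

namespace IsHermitian

variable {A : Matrix n n 𝕜} (hA : A.IsHermitian)

theorem cfc_mul_cfc (f g : ℝ → ℝ) : hA.cfc f * hA.cfc g = hA.cfc (fun x => f x * g x) := by
  simp only [← cfc_eq hA]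
  exact (cfc_mul f g A (A.finite_real_spectrum.continuousOn f)
    (A.finite_real_spectrum.continuousOn g)).symm

theorem cfc_congr {f g : ℝ → ℝ} (hfg : ∀ i, f (hA.eigenvalues i) = g (hA.eigenvalues i)) :
    hA.cfc f = hA.cfc g := by
  simp only [IsHermitian.cfc, Function.comp_def, hfg]

theorem cfc_id_eq : hA.cfc id = A := by
  rw [← cfc_eq hA, cfc_id ℝ A]

theorem cfc_one_eq : hA.cfc (fun _ => 1) = 1 := by
  rw [← cfc_eq hA, cfc_const_one ℝ A hA.isSelfAdjoint]

theorem isHermitian_cfc (f : ℝ → ℝ) : (hA.cfc f).IsHermitian := by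
  rw [← cfc_eq hA]
  exact cfc_predicate f A

theorem re_trace_cfc (f : ℝ → ℝ) : RCLike.re (hA.cfc f).trace = ∑ i, f (hA.eigenvalues i) := by
  rw [IsHermitian.cfc, Unitary.conjStarAlgAut_apply, trace_mul_cycle, Unitary.coe_star_mul_self,
    Matrix.one_mul, trace_diagonal, map_sum]
  simp

end IsHermitian

namespace PosSemidef

variable {A : Matrix n n 𝕜} (hA : A.PosSemidef)

theorem sqrt_eq_cfc : hA.sqrt = hA.1.cfc Real.sqrt := by
  rw [IsHermitian.cfc, Unitary.conjStarAlgAut_apply]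
  rfl

theorem isHermitian_sqrt : hA.sqrt.IsHermitian := by
  rw [sqrt_eq_cfc]
  exact hA.1.isHermitian_cfc _

theorem sqrt_mul_sqrt : hA.sqrt * hA.sqrt = A := by
  rw [sqrt_eq_cfc, hA.1.cfc_mul_cfc, hA.1.cfc_congr (g := id)
    fun i => Real.mul_self_sqrt (hA.eigenvalues_nonneg i), hA.1.cfc_id_eq]

theorem re_trace_sqrt : RCLike.re hA.sqrt.trace = ∑ i, √(hA.1.eigenvalues i) := by
  rw [sqrt_eq_cfc, hA.1.re_trace_cfc]

theorem exists_isHermitian_mul_eq_one_trace_le {ε : ℝ} (hε : 0 < ε) :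
    ∃ X Y : Matrix n n 𝕜, X.IsHermitian ∧ Y.IsHermitian ∧ X * Y = 1 ∧
      (RCLike.re (X * X).trace + RCLike.re (Y * Y * A).trace) / 2
        ≤ ∑ i, √(hA.1.eigenvalues i + ε) := by
  set q : ℝ → ℝ := fun x => √(√(x + ε))
  have hq : ∀ i, 0 < q (hA.1.eigenvalues i) := fun i =>
    Real.sqrt_pos.2 (Real.sqrt_pos.2 (by linarith [hA.eigenvalues_nonneg i]))
  refine ⟨hA.1.cfc q, hA.1.cfc (fun x => (q x)⁻¹), hA.1.isHermitian_cfc _,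
    hA.1.isHermitian_cfc _, ?_, ?_⟩
  · rw [hA.1.cfc_mul_cfc, hA.1.cfc_congr (g := fun _ => 1) fun i => mul_inv_cancel₀ (hq i).ne',
      hA.1.cfc_one_eq]
  have hYYA : hA.1.cfc (fun x => (q x)⁻¹) * hA.1.cfc (fun x => (q x)⁻¹) * A
      = hA.1.cfc (fun x => (q x)⁻¹ * (q x)⁻¹ * x) := by
    have h := hA.1.cfc_mul_cfc (fun x => (q x)⁻¹ * (q x)⁻¹) id
    rw [hA.1.cfc_id_eq] at h
    rw [hA.1.cfc_mul_cfc, h]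
    rfl
  rw [hYYA, hA.1.cfc_mul_cfc, hA.1.re_trace_cfc, hA.1.re_trace_cfc, ← sum_add_distrib, sum_div]
  refine sum_le_sum fun i _ => ?_
  have hq4 : q (hA.1.eigenvalues i) ^ 4 = hA.1.eigenvalues i + ε := by
    rw [show (4 : ℕ) = 2 * 2 from rfl, pow_mul, Real.sq_sqrt (Real.sqrt_nonneg _),
      Real.sq_sqrt (by linarith [hA.eigenvalues_nonneg i])]
  have hsq : √(hA.1.eigenvalues i + ε) = q (hA.1.eigenvalues i) ^ 2 :=
    (Real.sq_sqrt (Real.sqrt_nonneg _)).symm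
  have hqi := hq i
  rw [hsq]
  field_simp
  nlinarith

end PosSemidef

end Matrix

theorem Matrix.IsHermitian.traceNorm_le_of_mul_eq_one {n : Type*} [Fintype n] [DecidableEq n]
    {A X Y : Matrix n n ℂ} (hA : A.IsHermitian) (hX : X.IsHermitian) (hY : Y.IsHermitian)
    (hXY : X * Y = 1) :
    traceNorm A ≤ ((X * X).trace.re + (Y * Y * (A * A)).trace.re) / 2 := by
  have hP := posSemidef_conjTranspose_mul_self A
  have h := hP.isHermitian_sqrt.re_trace_le_of_mul_eq_one hX hY hXY
  have hsq : hP.sqrt * hP.sqrt = A * A := by rw [hP.sqrt_mul_sqrt, hA.eq]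
  rwa [hsq] at h

theorem inv_card_mul_sum_traceNorm_le {ι : Type*} [Fintype ι] [Nonempty ι] {n : Type*}
    [Fintype n] [DecidableEq n] {A : ι → Matrix n n ℂ} (hA : ∀ i, (A i).IsHermitian)
    {X Y : Matrix n n ℂ} (hX : X.IsHermitian) (hY : Y.IsHermitian) (hXY : X * Y = 1) :
    (Fintype.card ι : ℝ)⁻¹ * ∑ i, traceNorm (A i)
      ≤ ((X * X).trace.re + (Y * Y * ((Fintype.card ι : ℂ)⁻¹ • ∑ i, A i * A i)).trace.re) / 2 := by
  have hcard : (0 : ℝ) < Fintype.card ι := Nat.cast_pos.2 Fintype.card_pos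
  have htrace : (Y * Y * ((Fintype.card ι : ℂ)⁻¹ • ∑ i, A i * A i)).trace.re
      = (Fintype.card ι : ℝ)⁻¹ * ∑ i, (Y * Y * (A i * A i)).trace.re := by
    rw [Matrix.mul_smul, trace_smul, Matrix.mul_sum, trace_sum, smul_eq_mul,
      ← Complex.ofReal_natCast, ← Complex.ofReal_inv, Complex.re_ofReal_mul, Complex.re_sum]
  calc (Fintype.card ι : ℝ)⁻¹ * ∑ i, traceNorm (A i)
      ≤ (Fintype.card ι : ℝ)⁻¹ * ∑ i, ((X * X).trace.re + (Y * Y * (A i * A i)).trace.re) / 2 :=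
        mul_le_mul_of_nonneg_left
          (sum_le_sum fun i _ => (hA i).traceNorm_le_of_mul_eq_one hX hY hXY) (by positivity)
    _ = _ := by
        rw [htrace, ← sum_div, sum_add_distrib, sum_const, card_univ, nsmul_eq_mul]
        field_simp

/-- E_u ‖ρ_u - ρ̄‖₁ ≤ tr √(E_u ρ_u² − ρ̄²). -/
theorem average_trace_distance_bound
    {U : Type*} [Fintype U] [Nonempty U] {n : Type*} [Fintype n] [DecidableEq n]
    (ρ : U → Matrix n n ℂ) (hρ : ∀ u, (ρ u).PosSemidef)
    (ρbar : Matrix n n ℂ) (hbar : ρbar = ((Fintype.card U : ℂ))⁻¹ • ∑ u : U, ρ u)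
    (hPSD : (((Fintype.card U : ℂ))⁻¹ • (∑ u : U, ρ u * ρ u) - ρbar * ρbar).PosSemidef) :
    ((Fintype.card U : ℝ))⁻¹ * ∑ u : U, traceNorm (ρ u - ρbar)
      ≤ (hPSD.sqrt.trace).re := by
  have hbarH : ρbar.IsHermitian :=
    hbar ▸ ((posSemidef_sum _ fun u _ => hρ u).smul (by positivity)).1
  have hbound : ∀ ε > 0, (Fintype.card U : ℝ)⁻¹ * ∑ u, traceNorm (ρ u - ρbar)
      ≤ ∑ i, √(hPSD.1.eigenvalues i + ε) := by
    intro ε hε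
    obtain ⟨X, Y, hX, hY, hXY, hle⟩ := hPSD.exists_isHermitian_mul_eq_one_trace_le hε
    refine (inv_card_mul_sum_traceNorm_le (fun u => (hρ u).1.sub hbarH) hX hY hXY).trans ?_
    rwa [inv_card_smul_sum_sub_mul_sub ρ hbar]
  have hlim : Tendsto (fun ε => ∑ i, √(hPSD.1.eigenvalues i + ε)) (𝓝[>] 0)
      (𝓝 (∑ i, √(hPSD.1.eigenvalues i))) := by
    refine tendsto_nhdsWithin_of_tendsto_nhds (tendsto_finsetSum _ fun i _ => ?_)
    exact (continuous_const.add continuous_id).sqrt.tendsto' 0 _ (by simp)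
  rw [← RCLike.re_to_complex, hPSD.re_trace_sqrt]
  exact ge_of_tendsto hlim (eventually_nhdsWithin_of_forall hbound)
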